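/- (Finite-sample core of the consistency theorem for the multi-head critic bonus.) The variance of the bootstrap deviation D = φᵀ Λ⁻¹ ( (1/ζ) Σ_{i∈S} φ_i ε_i − Σ_{i=1}^n φ_i ε_i ) equals ((1 − ζ)/ζ) · σ² · (φᵀ Λ⁻¹ φ − λ · φᵀ Λ⁻² φ); in particular, the standard deviation of D equals √((1 − ζ)/ζ) · σ · √(φᵀ Λ⁻¹ φ − λ · φᵀ Λ⁻² φ), matching the elliptical (count-based) bonus √(φᵀ Λ⁻¹ φ) up to the correction term λ · φᵀ Λ⁻² φ and the constant factor √((1 − ζ)/ζ) · σ. -/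

import Mathlib

/-!
Write `a i = φᵀ Λ⁻¹ φ_i` and `w i = 1[i ∈ S] / ζ - 1`, so that `D = ∑ i, a i * w i * ε i`.
The weights are functions of `S`, hence independent of the centred, uncorrelated noise, so all
cross terms vanish and `E[D²] = σ² ∑ i, a i² E[w i²]`. Each index lies in the uniform `m`-subset
`S` with probability `ζ = m / n`, which gives `E[w i²] = 1 / ζ - 1`. Finally, with `ψ = Λ⁻¹ φ`,
`∑ i, a i² = ψᵀ (Λ - λ I) ψ = φᵀ Λ⁻¹ φ - λ φᵀ Λ⁻² φ`.
-/

open Matrix MeasureTheory ProbabilityTheory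
open scoped ENNReal

instance instMeasurableSpaceFinsetFin (n : ℕ) : MeasurableSpace (Finset (Fin n)) := ⊤

instance instDiscreteMeasurableSpaceFinsetFin (n : ℕ) :
    DiscreteMeasurableSpace (Finset (Fin n)) :=
  ⟨fun _ => trivial⟩

namespace Matrix

variable {R n ι : Type*} [CommRing R] [Fintype n] [DecidableEq n] [Fintype ι]

theorem nonsing_inv_mul_mul_nonsing_inv (A : Matrix n n R) : A⁻¹ * A * A⁻¹ = A⁻¹ := by
  by_cases h : IsUnit A.det
  · rw [nonsing_inv_mul _ h, one_mul]
  · simp [nonsing_inv_apply_not_isUnit _ h]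

omit [DecidableEq n] in
theorem dotProduct_sum_vecMulVec_mulVec (v : ι → n → R) (x : n → R) :
    x ⬝ᵥ ((∑ i, vecMulVec (v i) (v i)) *ᵥ x) = ∑ i, (x ⬝ᵥ v i) ^ 2 := by
  rw [sum_mulVec, dotProduct_sum]
  refine Finset.sum_congr rfl fun i _ => ?_
  rw [vecMulVec_mulVec, op_smul_eq_smul, dotProduct_smul, smul_eq_mul, dotProduct_comm (v i),
    sq]

theorem sum_sq_dotProduct_inv_mulVec (v : ι → n → R) (φ : n → R) (lam : R)
    (Λ : Matrix n n R) (hΛ : Λ = lam • (1 : Matrix n n R) + ∑ i, vecMulVec (v i) (v i)) :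
    ∑ i, (φ ⬝ᵥ (Λ⁻¹ *ᵥ v i)) ^ 2 =
      φ ⬝ᵥ (Λ⁻¹ *ᵥ φ) - lam * (φ ⬝ᵥ ((Λ⁻¹ * Λ⁻¹) *ᵥ φ)) := by
  have hsymm : Λ⁻¹ᵀ = Λ⁻¹ := by
    simp [hΛ, transpose_nonsing_inv, transpose_sum, transpose_vecMulVec]
  have hdot : ∀ w, φ ⬝ᵥ (Λ⁻¹ *ᵥ w) = (Λ⁻¹ *ᵥ φ) ⬝ᵥ w := fun w => by
    rw [dotProduct_mulVec, ← mulVec_transpose, hsymm]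
  have hgram : ∑ i, vecMulVec (v i) (v i) = Λ - lam • 1 := by rw [hΛ, add_sub_cancel_left]
  calc ∑ i, (φ ⬝ᵥ (Λ⁻¹ *ᵥ v i)) ^ 2
      = (Λ⁻¹ *ᵥ φ) ⬝ᵥ ((Λ - lam • 1) *ᵥ (Λ⁻¹ *ᵥ φ)) := by
        simp only [hdot, ← hgram, dotProduct_sum_vecMulVec_mulVec]
    _ = φ ⬝ᵥ (Λ⁻¹ *ᵥ φ) - lam * (φ ⬝ᵥ ((Λ⁻¹ * Λ⁻¹) *ᵥ φ)) := by
        rw [← hdot, mulVec_mulVec, mulVec_mulVec, mul_sub, sub_mul,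
          nonsing_inv_mul_mul_nonsing_inv, mul_smul_comm, mul_one, smul_mul_assoc, sub_mulVec,
          dotProduct_sub, smul_mulVec, dotProduct_smul, smul_eq_mul]

end Matrix

section

open Finset

theorem smul_sum_sub_sum_eq_sum_ite_smul {ι R M : Type*} [Fintype ι] [DecidableEq ι] [Ring R]
    [AddCommGroup M] [Module R M] (c : R) (s : Finset ι) (v : ι → M) :
    c • ∑ i ∈ s, v i - ∑ i, v i = ∑ i, ((if i ∈ s then c else 0) - 1) • v i := by
  simp_rw [sub_smul, sum_sub_distrib, one_smul, ite_smul, zero_smul, sum_ite_mem, univ_inter,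
    smul_sum]

theorem dotProduct_mulVec_smul_sum_sub_sum {ι n R : Type*} [Fintype ι] [DecidableEq ι]
    [Fintype n] [CommRing R] (φ : n → R) (M : Matrix n n R) (c : R) (s : Finset ι) (e : ι → R)
    (v : ι → n → R) :
    φ ⬝ᵥ (M *ᵥ (c • ∑ i ∈ s, e i • v i - ∑ i, e i • v i)) =
      ∑ i, φ ⬝ᵥ (M *ᵥ v i) * ((if i ∈ s then c else 0) - 1) * e i := by
  rw [smul_sum_sub_sum_eq_sum_ite_smul, mulVec_sum, dotProduct_sum]
  refine sum_congr rfl fun i _ => ?_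
  rw [smul_smul, mulVec_smul, dotProduct_smul, smul_eq_mul]
  ring

theorem card_filter_mem_powersetCard_div_card {n m : ℕ} (hm : 1 ≤ m) (hmn : m ≤ n)
    (i : Fin n) :
    (#{s ∈ powersetCard m univ | i ∈ s} : ℝ) / #(powersetCard m (univ : Finset (Fin n))) =
      m / n := by
  obtain ⟨k, rfl⟩ := Nat.exists_eq_add_of_le' hm
  obtain ⟨l, rfl⟩ := Nat.exists_eq_add_of_le' (hm.trans hmn)
  have hsub := card_filter_powersetCard_subset {i} univ (k + 1) (subset_univ _) (by simp)
  simp only [singleton_subset_iff, card_univ, Fintype.card_fin, card_singleton,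
    add_tsub_cancel_right] at hsub
  rw [hsub, card_powersetCard, card_univ, Fintype.card_fin, div_eq_div_iff
    (by exact_mod_cast (Nat.choose_pos hmn).ne') (by positivity)]
  norm_cast
  rw [mul_comm, Nat.add_one_mul_choose_eq, mul_comm]

variable {Ω : Type*} [MeasurableSpace Ω] {μ : Measure Ω}

theorem map_eq_uniformOfFinset_powersetCard {n m : ℕ} (hmn : m ≤ n) {S : Ω → Finset (Fin n)}
    (hS : Measurable S)
    (hS_law : ∀ s : Finset (Fin n),
      μ (S ⁻¹' {s}) = if s.card = m then ((n.choose m : ℝ≥0∞))⁻¹ else 0) :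
    μ.map S = (PMF.uniformOfFinset (powersetCard m univ)
      (powersetCard_nonempty.2 (by simpa using hmn))).toMeasure := by
  refine Measure.ext_of_singleton fun s => ?_
  rw [Measure.map_apply hS (measurableSet_singleton s), hS_law,
    PMF.toMeasure_apply_singleton _ _ (measurableSet_singleton s), PMF.uniformOfFinset_apply]
  simp

theorem measureReal_mem_eq_div {n m : ℕ} (hm : 1 ≤ m) (hmn : m ≤ n) {S : Ω → Finset (Fin n)}
    (hS : Measurable S)
    (hS_law : ∀ s : Finset (Fin n),
      μ (S ⁻¹' {s}) = if s.card = m then ((n.choose m : ℝ≥0∞))⁻¹ else 0) (i : Fin n) :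
    μ.real {ω | i ∈ S ω} = m / n := by
  change μ.real (S ⁻¹' {s | i ∈ s}) = _
  rw [← map_measureReal_apply hS .of_discrete, map_eq_uniformOfFinset_powersetCard hmn hS hS_law,
    measureReal_def, PMF.toMeasure_uniformOfFinset_apply _ _ .of_discrete, ENNReal.toReal_div,
    ENNReal.toReal_natCast, ENNReal.toReal_natCast]
  convert card_filter_mem_powersetCard_div_card hm hmn i using 4
  simp only [Set.mem_ofPred_eq]

theorem integral_indicator_inv_sub_one_sq [IsProbabilityMeasure μ] {A : Set Ω}
    (hA : MeasurableSet A) (hA₀ : μ.real A ≠ 0) :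
    ∫ ω, (A.indicator (fun _ => (μ.real A)⁻¹) ω - 1) ^ 2 ∂μ = (1 - μ.real A) / μ.real A := by
  have hsq : ∀ ω, (A.indicator (fun _ => (μ.real A)⁻¹) ω - 1) ^ 2 =
      A.indicator (fun _ => (μ.real A)⁻¹ ^ 2 - 2 * (μ.real A)⁻¹) ω + 1 := fun ω => by
    by_cases hω : ω ∈ A
    · rw [Set.indicator_of_mem hω, Set.indicator_of_mem hω]
      ring
    · rw [Set.indicator_of_notMem hω, Set.indicator_of_notMem hω]
      ring
  simp_rw [hsq]
  rw [integral_add ((integrable_const _).indicator hA) (integrable_const _),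
    integral_indicator_const _ hA, integral_const, probReal_univ, smul_eq_mul, smul_eq_mul]
  field_simp
  ring

theorem integral_sq_sum_mul_eq_of_indepFun {ι : Type*} [Fintype ι]
    {X ε : ι → Ω → ℝ} {σ : ℝ} (hX : ∀ i, MemLp (X i) ∞ μ) (hε : ∀ i, MemLp (ε i) 2 μ)
    (hvar : ∀ i, ∫ ω, ε i ω ^ 2 ∂μ = σ ^ 2)
    (huncorr : Pairwise fun i j => ∫ ω, ε i ω * ε j ω ∂μ = 0)
    (hXε : IndepFun (fun ω i => X i ω) (fun ω i => ε i ω) μ) :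
    ∫ ω, (∑ i, X i ω * ε i ω) ^ 2 ∂μ = σ ^ 2 * ∑ i, ∫ ω, X i ω ^ 2 ∂μ := by
  have hL2 : ∀ i, MemLp (fun ω => X i ω * ε i ω) 2 μ := fun i => (hε i).mul' (hX i)
  have hint : ∀ i j, Integrable (fun ω => (X i ω * ε i ω) * (X j ω * ε j ω)) μ :=
    fun i j => (hL2 i).integrable_mul (hL2 j)
  have hsplit : ∀ i j, ∫ ω, (X i ω * ε i ω) * (X j ω * ε j ω) ∂μ =
      (∫ ω, X i ω * X j ω ∂μ) * ∫ ω, ε i ω * ε j ω ∂μ := by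
    intro i j
    have hmul : Measurable fun x : ι → ℝ => x i * x j := by fun_prop
    have hind : IndepFun (fun ω => X i ω * X j ω) (fun ω => ε i ω * ε j ω) μ :=
      hXε.comp hmul hmul
    rw [← hind.integral_fun_mul_eq_mul_integral ((hX i).1.mul (hX j).1)
      ((hε i).1.mul (hε j).1)]
    congr with ω
    ring
  simp_rw [sq (∑ i, _), sum_mul_sum]
  rw [integral_finsetSum _ fun i _ => integrable_finsetSum _ fun j _ => hint i j, mul_sum]
  refine sum_congr rfl fun i _ => ?_
  rw [integral_finsetSum _ fun j _ => hint i j, sum_eq_single i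
    (fun j _ hji => by rw [hsplit, huncorr hji.symm, mul_zero]) (by simp), hsplit]
  simp_rw [← sq, hvar, mul_comm]

theorem integral_ite_mem_sub_one_sq [IsProbabilityMeasure μ] {n m : ℕ} (hm : 1 ≤ m)
    (hmn : m ≤ n) {S : Ω → Finset (Fin n)} (hS : Measurable S)
    (hS_law : ∀ s : Finset (Fin n),
      μ (S ⁻¹' {s}) = if s.card = m then ((n.choose m : ℝ≥0∞))⁻¹ else 0)
    {ζ : ℝ} (hζ : ζ = m / n) (i : Fin n) :
    ∫ ω, ((if i ∈ S ω then 1 / ζ else 0) - 1) ^ 2 ∂μ = (1 - ζ) / ζ := by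
  have hP : μ.real {ω | i ∈ S ω} = ζ :=
    (measureReal_mem_eq_div hm hmn hS hS_law i).trans hζ.symm
  have hζ₀ : ζ ≠ 0 := by
    rw [hζ]
    exact div_ne_zero (Nat.cast_ne_zero.2 (by omega)) (Nat.cast_ne_zero.2 (by omega))
  have h := integral_indicator_inv_sub_one_sq (A := {ω | i ∈ S ω})
    (hS (t := {s | i ∈ s}) .of_discrete) (hP ▸ hζ₀)
  rw [hP] at h
  rw [← h]
  congr with ω
  simp [Set.indicator_apply]

theorem memLp_comp_of_discrete [IsFiniteMeasure μ] {β E : Type*} [MeasurableSpace β]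
    [DiscreteMeasurableSpace β] [Finite β] [NormedAddCommGroup E] {S : Ω → β}
    (hS : Measurable S) (g : β → E) (p : ℝ≥0∞) : MemLp (fun ω => g (S ω)) p μ :=
  (memLp_map_measure_iff .of_discrete hS.aemeasurable).1 .of_discrete

theorem ProbabilityTheory.iIndepFun.integral_mul_eq_zero {ι : Type*} {ε : ι → Ω → ℝ}
    (hε : iIndepFun ε μ) (hmeas : ∀ i, AEStronglyMeasurable (ε i) μ)
    (hmean : ∀ i, ∫ ω, ε i ω ∂μ = 0) :
    Pairwise fun i j => ∫ ω, ε i ω * ε j ω ∂μ = 0 := fun i j hij => by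
  dsimp only
  rw [(hε.indepFun hij).integral_fun_mul_eq_mul_integral (hmeas i) (hmeas j), hmean i, zero_mul]

end

theorem bootstrap_bonus_consistency_core_general
    {d n : ℕ}
    (φi : Fin n → Fin d → ℝ) (φ : Fin d → ℝ) (lam : ℝ)
    (Λ : Matrix (Fin d) (Fin d) ℝ)
    (hΛ : Λ = lam • (1 : Matrix (Fin d) (Fin d) ℝ) + ∑ i, vecMulVec (φi i) (φi i))
    {Ω : Type*} [MeasurableSpace Ω] (μ : Measure Ω) [IsProbabilityMeasure μ]
    (ε : Fin n → Ω → ℝ)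
    (hε_indep : iIndepFun ε μ)
    (hε_L2 : ∀ i, MemLp (ε i) 2 μ)
    (σ : ℝ) (hσ : 0 ≤ σ)
    (hε_mean : ∀ i, ∫ ω, ε i ω ∂μ = 0)
    (hε_var : ∀ i, ∫ ω, (ε i ω) ^ 2 ∂μ = σ ^ 2)
    (m : ℕ) (hm : 1 ≤ m) (hmn : m ≤ n)
    (ζ : ℝ) (hζ : ζ = (m : ℝ) / n)
    (S : Ω → Finset (Fin n)) (hS_meas : Measurable S)
    (hS_law : ∀ s : Finset (Fin n),
      μ (S ⁻¹' {s}) = if s.card = m then ((n.choose m : ℝ≥0∞))⁻¹ else 0)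
    (hS_indep : IndepFun S (fun ω i => ε i ω) μ)
    (D : Ω → ℝ)
    (hD : ∀ ω, D ω = φ ⬝ᵥ (Λ⁻¹ *ᵥ
      ((1 / ζ) • (∑ i ∈ S ω, ε i ω • φi i) - ∑ i, ε i ω • φi i))) :
    (∫ ω, (D ω) ^ 2 ∂μ
        = ((1 - ζ) / ζ) * σ ^ 2 *
          (φ ⬝ᵥ (Λ⁻¹ *ᵥ φ) - lam * (φ ⬝ᵥ ((Λ⁻¹ * Λ⁻¹) *ᵥ φ)))) ∧
    (Real.sqrt (∫ ω, (D ω) ^ 2 ∂μ)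
        = Real.sqrt ((1 - ζ) / ζ) * σ *
          Real.sqrt (φ ⬝ᵥ (Λ⁻¹ *ᵥ φ) - lam * (φ ⬝ᵥ ((Λ⁻¹ * Λ⁻¹) *ᵥ φ)))) := by
  have hn : (0 : ℝ) < n := by exact_mod_cast hm.trans hmn
  have hζ₀ : 0 < ζ := by rw [hζ]; exact div_pos (by exact_mod_cast hm) hn
  have hζ₁ : ζ ≤ 1 := by rw [hζ, div_le_one hn]; exact_mod_cast hmn
  let a : Fin n → ℝ := fun i => φ ⬝ᵥ (Λ⁻¹ *ᵥ φi i)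
  let g : Fin n → Finset (Fin n) → ℝ := fun i s =>
    a i * ((if i ∈ s then 1 / ζ else 0) - 1)
  have hDX : ∀ ω, D ω = ∑ i, g i (S ω) * ε i ω := fun ω => by
    rw [hD, dotProduct_mulVec_smul_sum_sub_sum]
  have hg2 : ∀ i, ∫ ω, g i (S ω) ^ 2 ∂μ = a i ^ 2 * ((1 - ζ) / ζ) := fun i => by
    simp_rw [g, mul_pow]
    rw [integral_const_mul, integral_ite_mem_sub_one_sq hm hmn hS_meas hS_law hζ]
  have hsum : ∑ i, a i ^ 2 = φ ⬝ᵥ (Λ⁻¹ *ᵥ φ) - lam * (φ ⬝ᵥ ((Λ⁻¹ * Λ⁻¹) *ᵥ φ)) :=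
    sum_sq_dotProduct_inv_mulVec φi φ lam Λ hΛ
  have hvar : ∫ ω, (D ω) ^ 2 ∂μ
      = ((1 - ζ) / ζ) * σ ^ 2 * (φ ⬝ᵥ (Λ⁻¹ *ᵥ φ) - lam * (φ ⬝ᵥ ((Λ⁻¹ * Λ⁻¹) *ᵥ φ))) := by
    simp_rw [hDX]
    rw [integral_sq_sum_mul_eq_of_indepFun (fun _ => memLp_comp_of_discrete hS_meas _ _) hε_L2
      hε_var (hε_indep.integral_mul_eq_zero (fun i => (hε_L2 i).1) hε_mean)
      (hS_indep.comp (φ := fun s i => g i s) .of_discrete measurable_id)]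
    simp_rw [hg2, ← Finset.sum_mul, hsum]
    ring
  have hc : 0 ≤ (1 - ζ) / ζ := div_nonneg (by linarith) hζ₀.le
  refine ⟨hvar, ?_⟩
  rw [hvar, Real.sqrt_mul (mul_nonneg hc (sq_nonneg σ)), Real.sqrt_mul hc, Real.sqrt_sq hσ]

/-- Finite-sample core of the consistency theorem for the multi-head critic
bonus: the variance of the bootstrap deviation
`D = φᵀ Λ⁻¹ ((1/ζ) Σ_{i∈S} φ_i ε_i − Σ_{i=1}^n φ_i ε_i)` equals
`((1 − ζ)/ζ)·σ²·(φᵀ Λ⁻¹ φ − λ·φᵀ Λ⁻² φ)`; in particular, the standard deviation of `D`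
equals `√((1 − ζ)/ζ)·σ·√(φᵀ Λ⁻¹ φ − λ·φᵀ Λ⁻² φ)`, matching the elliptical (count-based)
bonus `√(φᵀ Λ⁻¹ φ)` up to the correction term `λ·φᵀ Λ⁻² φ` and the constant factor
`√((1 − ζ)/ζ)·σ`. -/
theorem bootstrap_bonus_consistency_core
    {d n : ℕ} (hn : 1 ≤ n)
    (φi : Fin n → Fin d → ℝ) (φ : Fin d → ℝ) (lam : ℝ) (hlam : 0 < lam)
    (Λ : Matrix (Fin d) (Fin d) ℝ)
    (hΛ : Λ = lam • (1 : Matrix (Fin d) (Fin d) ℝ) + ∑ i, vecMulVec (φi i) (φi i))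
    {Ω : Type*} [MeasurableSpace Ω] (μ : Measure Ω) [IsProbabilityMeasure μ]
    (ε : Fin n → Ω → ℝ) (hε_meas : ∀ i, Measurable (ε i))
    (hε_indep : iIndepFun ε μ)
    (hε_L2 : ∀ i, MemLp (ε i) 2 μ)
    (σ : ℝ) (hσ : 0 ≤ σ)
    (hε_mean : ∀ i, ∫ ω, ε i ω ∂μ = 0)
    (hε_var : ∀ i, ∫ ω, (ε i ω) ^ 2 ∂μ = σ ^ 2)
    (m : ℕ) (hm : 1 ≤ m) (hmn : m ≤ n)
    (ζ : ℝ) (hζ : ζ = (m : ℝ) / n)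
    (S : Ω → Finset (Fin n)) (hS_meas : Measurable S)
    (hS_law : ∀ s : Finset (Fin n),
      μ (S ⁻¹' {s}) = if s.card = m then ((n.choose m : ℝ≥0∞))⁻¹ else 0)
    (hS_indep : IndepFun S (fun ω i => ε i ω) μ)
    (D : Ω → ℝ)
    (hD : ∀ ω, D ω = φ ⬝ᵥ (Λ⁻¹ *ᵥ
      ((1 / ζ) • (∑ i ∈ S ω, ε i ω • φi i) - ∑ i, ε i ω • φi i))) :
    (∫ ω, (D ω) ^ 2 ∂μ
        = ((1 - ζ) / ζ) * σ ^ 2 *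
          (φ ⬝ᵥ (Λ⁻¹ *ᵥ φ) - lam * (φ ⬝ᵥ ((Λ⁻¹ * Λ⁻¹) *ᵥ φ)))) ∧
    (Real.sqrt (∫ ω, (D ω) ^ 2 ∂μ)
        = Real.sqrt ((1 - ζ) / ζ) * σ *
          Real.sqrt (φ ⬝ᵥ (Λ⁻¹ *ᵥ φ) - lam * (φ ⬝ᵥ ((Λ⁻¹ * Λ⁻¹) *ᵥ φ)))) :=
  bootstrap_bonus_consistency_core_general φi φ lam Λ hΛ μ ε hε_indep hε_L2 σ hσ hε_mean hε_var m hm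
    hmn ζ hζ S hS_meas hS_law hS_indep D hD
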